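/- Let u^N(x,z,t) be the piecewise constant vertical profile equal to u_α(x,t) for z ∈ (z_{α−1/2}(x,t), z_{α+1/2}(x,t)), and define ŵ(x,z,t) = − ∂/∂x ∫_{z_b(x)}^{z} u^N(x,z′,t) dz′. Then for every layer α and every z ∈ (z_{α−1/2}, z_{α+1/2}) one has ŵ(x,z,t) = k_α(x,t) − z ∂_x u_α(x,t), where the functions k_α are recursively defined by k_1 = ∂_x(z_b u_1) and k_{α+1} = k_α + ∂_x( z_{α+1/2}(u_{α+1} − u_α) ). In particular ŵ is affine in z inside each layer and (in general) discontinuous at each interface z_{α+1/2}. -/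

import Mathlib

/-!
Inside layer `n + 1` one has `∫_{z_b}^z u^N = Σ_{j ≤ n} h_j u_j + (z − z_{n+1/2}) u_{n+1}`:
split `[z_b, z]` at the interfaces below `z`, on each piece of which `u^N` is a.e. constant.
The interfaces depend continuously on `x`, so this identity persists for `x'` near `x` and may be
differentiated: `ŵ = ∂ₓ(z_{n+1/2} u_{n+1} − Σ_{j ≤ n} h_j u_j) − z ∂ₓu_{n+1}`, and the first term
satisfies the recursion defining `k_{n+1}` because `z_{n+3/2} = z_{n+1/2} + h_{n+1}`.
-/

open MeasureTheory

/-- Interface heights `z_{α+1/2} = z_b + Σ_{j=1}^α l_j H`. -/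
noncomputable def zhalf (zb : ℝ → ℝ) (H : ℝ → ℝ → ℝ) (l : ℕ → ℝ) (α : ℕ) (x t : ℝ) : ℝ :=
  zb x + ∑ j ∈ Finset.Icc 1 α, l j * H x t

/-- The piecewise constant vertical velocity profile `u^N`, equal to `u_α(x,t)` for
`z ∈ (z_{α−1/2}, z_{α+1/2})`. -/
noncomputable def uN (zb : ℝ → ℝ) (H : ℝ → ℝ → ℝ) (l : ℕ → ℝ) (u : ℕ → ℝ → ℝ → ℝ)
    (N : ℕ) (x z t : ℝ) : ℝ :=
  ∑ α ∈ Finset.Icc 1 N,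
    Set.indicator (Set.Ioo (zhalf zb H l (α - 1) x t) (zhalf zb H l α x t))
      (fun _ => u α x t) z

/-- `ŵ(x,z,t) = −∂_x ∫_{z_b(x)}^z u^N(x,z′,t) dz′`. -/
noncomputable def what (zb : ℝ → ℝ) (H : ℝ → ℝ → ℝ) (l : ℕ → ℝ) (u : ℕ → ℝ → ℝ → ℝ)
    (N : ℕ) (x z t : ℝ) : ℝ :=
  -deriv (fun x' => ∫ z' in (zb x')..z, uN zb H l u N x' z' t) x

/-- The recursively defined functions `k_α`:
`k_1 = ∂_x(z_b u_1)` and `k_{α+1} = k_α + ∂_x(z_{α+1/2}(u_{α+1} − u_α))`. -/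
noncomputable def kf (zb : ℝ → ℝ) (H : ℝ → ℝ → ℝ) (l : ℕ → ℝ) (u : ℕ → ℝ → ℝ → ℝ) :
    ℕ → ℝ → ℝ → ℝ
  | 0, _, _ => 0
  | 1, x, t => deriv (fun x' => zb x' * u 1 x' t) x
  | α + 2, x, t => kf zb H l u (α + 1) x t
      + deriv (fun x' => zhalf zb H l (α + 1) x' t * (u (α + 2) x' t - u (α + 1) x' t)) x

open Set Filter Topology

theorem sum_indicator_Ioo_of_mem {s : ℕ → ℝ} {N β : ℕ} (hs : MonotoneOn s (Iic N))
    (hβ : β ∈ Finset.Icc 1 N) {z : ℝ} (hz : z ∈ Ioo (s (β - 1)) (s β)) (v : ℕ → ℝ) :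
    ∑ γ ∈ Finset.Icc 1 N, (Ioo (s (γ - 1)) (s γ)).indicator (fun _ => v γ) z = v β := by
  rw [Finset.sum_eq_single_of_mem β hβ, indicator_of_mem hz]
  intro γ hγ hne
  obtain ⟨hγ1, hγN⟩ := Finset.mem_Icc.1 hγ
  obtain ⟨hβ1, hβN⟩ := Finset.mem_Icc.1 hβ
  refine indicator_of_notMem (fun hzγ => ?_) _
  rcases lt_or_gt_of_ne hne with h | h
  · have : s γ ≤ s (β - 1) := hs (by simp; omega) (by simp; omega) (by omega)
    linarith [hzγ.2, hz.1]
  · have : s β ≤ s (γ - 1) := hs (by simpa using hβN) (by simp; omega) (by omega)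
    linarith [hzγ.1, hz.2]

theorem intervalIntegrable_sum_indicator_Ioo (N : ℕ) (s : ℕ → ℝ) (v : ℕ → ℝ) (a b : ℝ) :
    IntervalIntegrable
      (fun z => ∑ γ ∈ Finset.Icc 1 N, (Ioo (s (γ - 1)) (s γ)).indicator (fun _ => v γ) z)
      volume a b := by
  rw [← Finset.sum_fn]
  refine IntervalIntegrable.sum _ fun γ _ => ?_
  rw [intervalIntegrable_iff]
  exact (integrableOn_const measure_Ioc_lt_top.ne).indicator measurableSet_Ioo

theorem intervalIntegral_eq_sub_mul_of_eqOn_Ioo {f : ℝ → ℝ} {a b c : ℝ} (hab : a ≤ b)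
    (hf : EqOn f (fun _ => c) (Ioo a b)) : ∫ y in a..b, f y = (b - a) * c := by
  rw [intervalIntegral.integral_congr_Ioo_of_le hab hf, intervalIntegral.integral_const,
    smul_eq_mul]

theorem differentiable_slice {f : ℝ → ℝ → ℝ}
    (hf : Differentiable ℝ (fun q : ℝ × ℝ => f q.1 q.2)) (t : ℝ) : Differentiable ℝ (f · t) :=
  hf.comp (differentiable_id.prodMk (differentiable_const t))

section Layers

variable (zb : ℝ → ℝ) (H : ℝ → ℝ → ℝ) (l : ℕ → ℝ) (u : ℕ → ℝ → ℝ → ℝ)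

@[simp]
theorem zhalf_zero (x t : ℝ) : zhalf zb H l 0 x t = zb x := by
  simp [zhalf]

theorem zhalf_succ (n : ℕ) (x t : ℝ) :
    zhalf zb H l (n + 1) x t = zhalf zb H l n x t + l (n + 1) * H x t := by
  simp only [zhalf, Finset.sum_Icc_succ_top (Nat.le_add_left 1 n)]
  ring

theorem zhalf_monotoneOn {N : ℕ} (hl : ∀ j ∈ Finset.Icc 1 N, 0 ≤ l j) {x t : ℝ}
    (hH : 0 ≤ H x t) : MonotoneOn (fun β => zhalf zb H l β x t) (Iic N) := by
  intro β _ γ hγ hβγ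
  simp only [zhalf]
  exact add_le_add_right (Finset.sum_le_sum_of_subset_of_nonneg
    (Finset.Icc_subset_Icc_right hβγ) fun j hj _ =>
      mul_nonneg (hl j (Finset.Icc_subset_Icc_right hγ hj)) hH) _

noncomputable def discharge (n : ℕ) (x t : ℝ) : ℝ :=
  ∑ k ∈ Finset.range n, l (k + 1) * H x t * u (k + 1) x t

theorem discharge_succ (n : ℕ) (x t : ℝ) :
    discharge H l u (n + 1) x t = discharge H l u n x t + l (n + 1) * H x t * u (n + 1) x t :=
  Finset.sum_range_succ _ _

theorem integral_uN_of_mem_layer {N n : ℕ} (hn : n + 1 ≤ N) {x t z : ℝ}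
    (hmono : MonotoneOn (fun β => zhalf zb H l β x t) (Iic N))
    (hz : z ∈ Ioo (zhalf zb H l n x t) (zhalf zb H l (n + 1) x t)) :
    ∫ z' in zb x..z, uN zb H l u N x z' t
      = discharge H l u n x t + (z - zhalf zb H l n x t) * u (n + 1) x t := by
  have huN : ∀ k < N, EqOn (fun z' => uN zb H l u N x z' t) (fun _ => u (k + 1) x t)
      (Ioo (zhalf zb H l k x t) (zhalf zb H l (k + 1) x t)) := fun k hk z' hz' =>
    sum_indicator_Ioo_of_mem (s := fun β => zhalf zb H l β x t) hmono (by simp; omega)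
      (by simpa using hz') (fun γ => u γ x t)
  have hint : ∀ a b, IntervalIntegrable (fun z' => uN zb H l u N x z' t) volume a b :=
    intervalIntegrable_sum_indicator_Ioo N (fun β => zhalf zb H l β x t) (fun γ => u γ x t)
  have hlayer : ∀ k ∈ Finset.range n, ∫ z' in zhalf zb H l k x t..zhalf zb H l (k + 1) x t,
      uN zb H l u N x z' t = l (k + 1) * H x t * u (k + 1) x t := by
    intro k hk
    have hkn := Finset.mem_range.1 hk
    have hle : zhalf zb H l k x t ≤ zhalf zb H l (k + 1) x t :=
      hmono (by simp; omega) (by simp; omega) (by omega)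
    rw [intervalIntegral_eq_sub_mul_of_eqOn_Ioo hle (huN k (by omega)), zhalf_succ]
    ring
  have htop : ∫ z' in zhalf zb H l n x t..z, uN zb H l u N x z' t
      = (z - zhalf zb H l n x t) * u (n + 1) x t :=
    intervalIntegral_eq_sub_mul_of_eqOn_Ioo hz.1.le
      ((huN n hn).mono (Ioo_subset_Ioo_right hz.2.le))
  rw [← zhalf_zero zb H l x t,
    ← intervalIntegral.integral_add_adjacent_intervals (hint _ _) (hint _ _),
    ← intervalIntegral.sum_integral_adjacent_intervals (a := fun β => zhalf zb H l β x t)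
      fun k _ => hint _ _, Finset.sum_congr rfl hlayer, htop, discharge]

end Layers

section Derivatives

variable (zb : ℝ → ℝ) (H : ℝ → ℝ → ℝ) (l : ℕ → ℝ) (u : ℕ → ℝ → ℝ → ℝ) {t : ℝ}

theorem differentiable_zhalf (hzb : Differentiable ℝ zb) (hH : Differentiable ℝ (H · t))
    (n : ℕ) : Differentiable ℝ (fun x => zhalf zb H l n x t) := by
  unfold zhalf
  fun_prop

theorem differentiable_discharge (hH : Differentiable ℝ (H · t))
    (hu : ∀ β, Differentiable ℝ (u β · t)) (n : ℕ) :
    Differentiable ℝ (fun x => discharge H l u n x t) := by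
  unfold discharge
  fun_prop

theorem kf_succ (hzb : Differentiable ℝ zb) (hH : Differentiable ℝ (H · t))
    (hu : ∀ β, Differentiable ℝ (u β · t)) (n : ℕ) (x : ℝ) :
    kf zb H l u (n + 1) x t
      = deriv (fun x' => zhalf zb H l n x' t * u (n + 1) x' t - discharge H l u n x' t) x := by
  have hzh := differentiable_zhalf zb H l hzb hH
  have hdis := differentiable_discharge H l u hH hu
  induction n with
  | zero => simp [kf, discharge]
  | succ n ih =>
    rw [kf, ih, ← deriv_fun_add (by fun_prop) (by fun_prop)]
    congr 1
    funext x'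
    simp only [zhalf_succ, discharge_succ]
    ring

theorem what_eq_of_mem_layer {N n : ℕ} (hn : n + 1 ≤ N) (hl : ∀ j ∈ Finset.Icc 1 N, 0 ≤ l j)
    (hHnonneg : ∀ x, 0 ≤ H x t) (hzb : Differentiable ℝ zb) (hH : Differentiable ℝ (H · t))
    (hu : ∀ β, Differentiable ℝ (u β · t)) {x z : ℝ}
    (hz : z ∈ Ioo (zhalf zb H l n x t) (zhalf zb H l (n + 1) x t)) :
    what zb H l u N x z t = kf zb H l u (n + 1) x t - z * deriv (u (n + 1) · t) x := by
  have hzh := differentiable_zhalf zb H l hzb hH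
  have hdis := differentiable_discharge H l u hH hu
  have hnear : (fun x' => ∫ z' in zb x'..z, uN zb H l u N x' z' t) =ᶠ[𝓝 x]
      fun x' => z * u (n + 1) x' t
        - (zhalf zb H l n x' t * u (n + 1) x' t - discharge H l u n x' t) := by
    filter_upwards [(hzh n).continuous.continuousAt.eventually_lt continuousAt_const hz.1,
      continuousAt_const.eventually_lt (hzh (n + 1)).continuous.continuousAt hz.2]
      with x' h1 h2
    rw [integral_uN_of_mem_layer zb H l u hn (zhalf_monotoneOn zb H l hl (hHnonneg x'))
      ⟨h1, h2⟩]
    ring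
  rw [what, hnear.deriv_eq, deriv_fun_sub (by fun_prop) (by fun_prop), deriv_const_mul _ (hu _ x),
    kf_succ zb H l u hzb hH hu]
  ring

end Derivatives

theorem stmt11 (N : ℕ) (l : ℕ → ℝ)
    (hl : ∀ j ∈ Finset.Icc 1 N, 0 < l j)
    (zb : ℝ → ℝ) (H : ℝ → ℝ → ℝ)
    (hzb : ContDiff ℝ (⊤ : ℕ∞) zb)
    (hH : ContDiff ℝ (⊤ : ℕ∞) (fun q : ℝ × ℝ => H q.1 q.2))
    (hHpos : ∀ x t : ℝ, 0 < H x t)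
    (u : ℕ → ℝ → ℝ → ℝ)
    (hu : ∀ α, ContDiff ℝ (⊤ : ℕ∞) (fun q : ℝ × ℝ => u α q.1 q.2)) :
    ∀ α ∈ Finset.Icc 1 N, ∀ x t : ℝ,
      ∀ z ∈ Set.Ioo (zhalf zb H l (α - 1) x t) (zhalf zb H l α x t),
        what zb H l u N x z t
          = kf zb H l u α x t - z * deriv (fun x' => u α x' t) x := by
  intro α hα x t z hz
  obtain ⟨n, rfl⟩ : ∃ n, α = n + 1 := ⟨α - 1, by grind⟩
  rw [Nat.add_sub_cancel] at hz
  exact what_eq_of_mem_layer zb H l u (Finset.mem_Icc.1 hα).2 (fun j hj => (hl j hj).le)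
    (fun x => (hHpos x t).le) (hzb.differentiable (by simp))
    (differentiable_slice (hH.differentiable (by simp)) t)
    (fun β => differentiable_slice ((hu β).differentiable (by simp)) t) hz
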